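/- arXiv:2307.03271 — 3 statements merged into one kernel-verified Lean document; each statement's English description precedes it below -/
import Mathlib

section
/- Let $d=1$, $p\in(1,\infty)$, $c(k)\ge 0$ with $c(k)=0$ for $k\le 0$, and $A(k)=1/k$ for $k\ge 1$. If the operator $\mathcal{H}f(x)=\sum_{k=1}^{\infty}c(k)f(x/k)$ is bounded on $L^p(\mathbb{R})$, then $\sum_{k=1}^{\infty}c(k)k^{1/p}\le\|\mathcal{H}\|$; in particular the condition $N_p(c,A)<\infty$ is necessary for boundedness in this case. -/
/-!
Test `H` against `f = x ^ (-1/p) · 𝟙_(1,b)`, whose `p`-th power integrates to `log b`. Dilations act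
on `x ^ (-1/p)` by the factor `k ^ (1/p)`, so for `x ∈ (K, b)` every term `k ≤ K` of
`H f (x) = ∑ c k · f (x / k)` is still active and `|H f (x)| ≥ S_K · x ^ (-1/p)` with
`S_K = ∑_{k ≤ K} c k · k ^ (1/p)`. Taking `L^p` norms gives
`S_K (log b - log K) ^ (1/p) ≤ ‖H‖ (log b) ^ (1/p)`, and `b → ∞` yields `S_K ≤ ‖H‖` for every `K`.
-/

open MeasureTheory Filter Topology

noncomputable def truncatedPower (s a b : ℝ) : ℝ → ℝ :=
  (Set.Ioo a b).indicator (· ^ s)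

lemma truncatedPower_nonneg (s a b x : ℝ) (ha : 0 ≤ a) : 0 ≤ truncatedPower s a b x :=
  Set.indicator_nonneg (fun _ hy => Real.rpow_nonneg (ha.trans hy.1.le) s) x

lemma memLp_truncatedPower (s : ℝ) {a : ℝ} (ha : 0 < a) (b : ℝ) (q : ENNReal) :
    MemLp (truncatedPower s a b) q volume := by
  rw [truncatedPower, memLp_indicator_iff_restrict measurableSet_Ioo]
  obtain ⟨C, hC⟩ := isCompact_Icc.exists_bound_of_continuousOn (f := (· ^ s)) (s := Set.Icc a b)
    fun x hx =>
      (Real.continuousAt_rpow_const x s (Or.inl (ha.trans_le hx.1).ne')).continuousWithinAt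
  refine MemLp.of_bound (by fun_prop) C ?_
  filter_upwards [ae_restrict_mem measurableSet_Ioo] with x hx
  exact hC x (Set.Ioo_subset_Icc_self hx)

lemma eLpNorm_truncatedPower {p a b : ℝ} (hp : 0 < p) (ha : 0 < a) (hab : a ≤ b) :
    eLpNorm (truncatedPower (-(1 / p)) a b) (ENNReal.ofReal p) volume
      = ENNReal.ofReal ((Real.log b - Real.log a) ^ (1 / p)) := by
  have hp_ne : ENNReal.ofReal p ≠ 0 := ENNReal.ofReal_ne_zero_iff.mpr hp
  rw [(memLp_truncatedPower _ ha b _).eLpNorm_eq_integral_rpow_norm hp_ne ENNReal.ofReal_ne_top,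
    ENNReal.toReal_ofReal hp.le, ← one_div]
  have hpow : (fun x => ‖truncatedPower (-(1 / p)) a b x‖ ^ p) = (Set.Ioo a b).indicator (·⁻¹) := by
    funext x
    by_cases hx : x ∈ Set.Ioo a b
    · have hx0 : 0 < x := ha.trans hx.1
      rw [truncatedPower, Set.indicator_of_mem hx, Set.indicator_of_mem hx, Real.norm_eq_abs,
        abs_of_nonneg (Real.rpow_nonneg hx0.le _), ← Real.rpow_mul hx0.le,
        show -(1 / p) * p = -1 by field_simp, Real.rpow_neg_one]
    · simp [truncatedPower, hx, Real.zero_rpow hp.ne']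
  rw [hpow, integral_indicator measurableSet_Ioo, ← integral_Ioc_eq_integral_Ioo,
    ← intervalIntegral.integral_of_le hab,
    integral_inv (Set.notMem_uIcc_of_lt ha (ha.trans_le hab)),
    Real.log_div (ha.trans_le hab).ne' ha.ne']

/-- For `x ∈ (K, b)`, every dilate `x / (k + 1)` with `k < K` lies in `(1, b)`. -/
lemma sum_range_mul_rpow_le_tsum_truncatedPower (r : ℝ) {c : ℕ → ℝ} (hc : ∀ k, 0 ≤ c k)
    {K : ℕ} {b x : ℝ} (hx : x ∈ Set.Ioo (K : ℝ) b) :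
    (∑ k ∈ Finset.range K, c (k + 1) * ((k : ℝ) + 1) ^ r) * x ^ (-r)
      ≤ ∑' k : ℕ, c (k + 1) * truncatedPower (-r) 1 b (x / (k + 1)) := by
  have hx0 : 0 < x := (Nat.cast_nonneg K).trans_lt hx.1
  have hterm_nonneg : ∀ k : ℕ, 0 ≤ c (k + 1) * truncatedPower (-r) 1 b (x / (k + 1)) :=
    fun k => mul_nonneg (hc _) (truncatedPower_nonneg _ _ _ _ zero_le_one)
  have hsummable : Summable fun k : ℕ => c (k + 1) * truncatedPower (-r) 1 b (x / (k + 1)) := by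
    refine summable_of_ne_finset_zero (s := Finset.range ⌈x⌉₊) fun k hk => ?_
    have hkx : ⌈x⌉₊ ≤ k + 1 := (not_lt.mp (mt Finset.mem_range.mpr hk)).trans k.le_succ
    have hxk : x ≤ (k : ℝ) + 1 := (Nat.le_ceil x).trans (by exact_mod_cast hkx)
    have hout : x / (k + 1) ∉ Set.Ioo 1 b := fun h =>
      (h.1.trans_le ((div_le_one (by positivity)).mpr hxk)).false
    rw [truncatedPower, Set.indicator_of_notMem hout, mul_zero]
  refine le_trans (le_of_eq ?_) (hsummable.sum_le_tsum (Finset.range K) fun k _ => hterm_nonneg k)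
  rw [Finset.sum_mul]
  refine Finset.sum_congr rfl fun k hk => ?_
  have hk1 : (0 : ℝ) < k + 1 := by positivity
  have hkK : (k : ℝ) + 1 ≤ K := by exact_mod_cast Finset.mem_range.mp hk
  have hin : x / (k + 1) ∈ Set.Ioo 1 b :=
    ⟨(one_lt_div hk1).mpr (hkK.trans_lt hx.1),
      ((div_le_self hx0.le (by linarith)).trans_lt hx.2)⟩
  rw [truncatedPower, Set.indicator_of_mem hin, Real.div_rpow hx0.le hk1.le, Real.rpow_neg hk1.le,
    div_inv_eq_mul]
  ring

lemma le_of_forall_mul_sub_rpow_le {A B a r : ℝ}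
    (h : ∀ L, a < L → A * (L - a) ^ r ≤ B * L ^ r) : A ≤ B := by
  have hratio : Tendsto (fun L : ℝ => ((L - a) / L) ^ r) atTop (𝓝 1) := by
    have h1 : Tendsto (fun L : ℝ => 1 - a / L) atTop (𝓝 1) := by
      simpa using tendsto_const_nhds.sub ((tendsto_const_nhds (x := a)).div_atTop tendsto_id)
    have h2 : Tendsto (fun L : ℝ => (L - a) / L) atTop (𝓝 1) :=
      h1.congr' (by filter_upwards [eventually_ne_atTop 0] with L hL; field_simp)
    simpa using h2.rpow_const (Or.inl one_ne_zero)
  refine le_of_tendsto (by simpa using hratio.const_mul A) ?_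
  filter_upwards [eventually_gt_atTop a, eventually_gt_atTop 0] with L haL hL
  rw [Real.div_rpow (sub_pos.mpr haL).le hL.le, ← mul_div_assoc,
    div_le_iff₀ (Real.rpow_pos_of_pos hL r)]
  exact h L haL

def IsHausdorffOperator {q : ENNReal} [Fact (1 ≤ q)] (c : ℕ → ℝ)
    (H : Lp ℂ q (volume : Measure ℝ) →L[ℂ] Lp ℂ q (volume : Measure ℝ)) : Prop :=
  ∀ f : Lp ℂ q (volume : Measure ℝ),
    (H f : ℝ → ℂ) =ᵐ[volume] fun x => ∑' k : ℕ, (c (k + 1) : ℂ) * f (x / (k + 1))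

lemma IsHausdorffOperator.coeFn_apply_toLp_ae_eq {q : ENNReal} [Fact (1 ≤ q)] {c : ℕ → ℝ}
    {H : Lp ℂ q (volume : Measure ℝ) →L[ℂ] Lp ℂ q (volume : Measure ℝ)}
    (hH : IsHausdorffOperator c H) {f : ℝ → ℂ} (hf : MemLp f q volume) :
    (H (hf.toLp f) : ℝ → ℂ) =ᵐ[volume] fun x => ∑' k : ℕ, (c (k + 1) : ℂ) * f (x / (k + 1)) := by
  have hdilate : ∀ k : ℕ,
      (fun x : ℝ => hf.toLp f (x / (k + 1))) =ᵐ[volume] fun x => f (x / (k + 1)) := by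
    intro k
    have hqmp : Measure.QuasiMeasurePreserving (fun x : ℝ => x / (k + 1)) volume volume := by
      have hdiv : (fun x : ℝ => x / (k + 1)) = (((k : ℝ) + 1)⁻¹ • ·) := by
        funext x
        rw [smul_eq_mul, div_eq_inv_mul]
      rw [hdiv]
      exact Measure.quasiMeasurePreserving_smul volume (inv_ne_zero k.cast_add_one_ne_zero)
    exact hqmp.ae_eq_comp hf.coeFn_toLp
  filter_upwards [hH (hf.toLp f), ae_all_iff.mpr hdilate] with x hx hxk
  rw [hx]
  exact tsum_congr fun k => by rw [hxk k]

section HausdorffOperator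

variable {p : ℝ} [Fact (1 ≤ ENNReal.ofReal p)] {c : ℕ → ℝ}
  {H : Lp ℂ (ENNReal.ofReal p) (volume : Measure ℝ) →L[ℂ]
    Lp ℂ (ENNReal.ofReal p) (volume : Measure ℝ)}

lemma sum_range_mul_log_sub_le_opNorm_mul_log (hc : ∀ k, 0 ≤ c k) (hH : IsHausdorffOperator c H)
    {K : ℕ} (hK : 0 < K) {b : ℝ} (hKb : (K : ℝ) ≤ b) :
    (∑ k ∈ Finset.range K, c (k + 1) * ((k : ℝ) + 1) ^ (1 / p))
        * (Real.log b - Real.log K) ^ (1 / p)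
      ≤ ‖H‖ * Real.log b ^ (1 / p) := by
  have hp : 0 < p := zero_lt_one.trans_le (ENNReal.one_le_ofReal.mp Fact.out)
  set S := ∑ k ∈ Finset.range K, c (k + 1) * ((k : ℝ) + 1) ^ (1 / p)
  have hS : 0 ≤ S := Finset.sum_nonneg fun k _ => mul_nonneg (hc _) (by positivity)
  have hK1 : (1 : ℝ) ≤ K := by exact_mod_cast hK
  have hf : MemLp (fun x => (truncatedPower (-(1 / p)) 1 b x : ℂ)) (ENNReal.ofReal p) volume :=
    (memLp_truncatedPower _ one_pos b _).ofReal
  have hnormF : ‖hf.toLp _‖ = Real.log b ^ (1 / p) := by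
    rw [Lp.norm_toLp,
      eLpNorm_congr_norm_ae (g := truncatedPower (-(1 / p)) 1 b)
        (ae_of_all _ fun _ => Complex.norm_real _),
      eLpNorm_truncatedPower hp one_pos (hK1.trans hKb), Real.log_one, sub_zero,
      ENNReal.toReal_ofReal (Real.rpow_nonneg (Real.log_nonneg (hK1.trans hKb)) _)]
  have hlower : ∀ᵐ x ∂volume, ‖(S • truncatedPower (-(1 / p)) K b) x‖ ≤ ‖H (hf.toLp _) x‖ := by
    filter_upwards [hH.coeFn_apply_toLp_ae_eq hf] with x hx
    by_cases hxK : x ∈ Set.Ioo (K : ℝ) b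
    · have hx0 : 0 < x := zero_lt_one.trans (hK1.trans_lt hxK.1)
      have hsum := sum_range_mul_rpow_le_tsum_truncatedPower (1 / p) hc hxK
      rw [Pi.smul_apply, truncatedPower, Set.indicator_of_mem hxK, hx, smul_eq_mul,
        Real.norm_eq_abs, abs_of_nonneg (mul_nonneg hS (Real.rpow_nonneg hx0.le _))]
      refine hsum.trans (le_of_eq ?_)
      simp_rw [← Complex.ofReal_mul, ← Complex.ofReal_tsum, Complex.norm_real, Real.norm_eq_abs]
      exact (abs_of_nonneg (tsum_nonneg fun k =>
        mul_nonneg (hc _) (truncatedPower_nonneg _ _ _ _ zero_le_one))).symm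
    · simp [truncatedPower, hxK]
  have hnormHF :
      eLpNorm (H (hf.toLp _)) (ENNReal.ofReal p) volume = ENNReal.ofReal ‖H (hf.toLp _)‖ := by
    rw [Lp.norm_def, ENNReal.ofReal_toReal (Lp.eLpNorm_ne_top _)]
  have hbound := eLpNorm_mono_ae (p := ENNReal.ofReal p) hlower
  rw [eLpNorm_const_smul, eLpNorm_truncatedPower hp (by positivity) hKb, hnormHF,
    Real.enorm_eq_ofReal hS, ← ENNReal.ofReal_mul hS,
    ENNReal.ofReal_le_ofReal_iff (norm_nonneg _)] at hbound
  exact hbound.trans ((H.le_opNorm _).trans_eq (by rw [hnormF]))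

lemma sum_range_mul_rpow_le_opNorm (hc : ∀ k, 0 ≤ c k) (hH : IsHausdorffOperator c H) (K : ℕ) :
    ∑ k ∈ Finset.range K, c (k + 1) * ((k : ℝ) + 1) ^ (1 / p) ≤ ‖H‖ := by
  rcases K.eq_zero_or_pos with rfl | hK
  · simp
  refine le_of_forall_mul_sub_rpow_le (a := Real.log K) (r := 1 / p) fun L hL => ?_
  have hKb : (K : ℝ) ≤ Real.exp L := by
    rw [← Real.exp_log (by positivity : (0 : ℝ) < K)]
    exact Real.exp_le_exp.mpr hL.le
  simpa using sum_range_mul_log_sub_le_opNorm_mul_log hc hH hK hKb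

end HausdorffOperator

theorem hausdorff_condition_necessary_general
    (p : ℝ) [Fact (1 ≤ ENNReal.ofReal p)]
    (c : ℕ → ℝ) (hc : ∀ k, 0 ≤ c k)
    (H : Lp ℂ (ENNReal.ofReal p) (volume : Measure ℝ) →L[ℂ]
        Lp ℂ (ENNReal.ofReal p) (volume : Measure ℝ))
    (hH : ∀ f : Lp ℂ (ENNReal.ofReal p) (volume : Measure ℝ),
      (H f : ℝ → ℂ) =ᵐ[volume]
        fun x => ∑' k : ℕ, (c (k + 1) : ℂ) * f (x / (k + 1))) :
    ∑' k : ℕ, ENNReal.ofReal (c (k + 1) * ((k : ℝ) + 1) ^ ((1 : ℝ) / p))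
      ≤ ENNReal.ofReal ‖H‖ := by
  refine ENNReal.tsum_le_of_sum_range_le fun K => ?_
  rw [← ENNReal.ofReal_sum_of_nonneg fun k _ => mul_nonneg (hc _) (by positivity)]
  exact ENNReal.ofReal_le_ofReal (sum_range_mul_rpow_le_opNorm hc hH K)

/-- Necessity of the condition `N_p(c,A) < ∞` in dimension one: if
`H f (x) = ∑_{k≥1} c k · f (x / k)` is bounded on `L^p(ℝ)` (with `c k ≥ 0`), then
`∑_{k≥1} c k · k^{1/p} ≤ ‖H‖`; in particular this sum is finite. -/
theorem hausdorff_condition_necessary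
    (p : ℝ) (hp : 1 < p) [Fact (1 ≤ ENNReal.ofReal p)]
    (c : ℕ → ℝ) (hc : ∀ k, 0 ≤ c k)
    (H : Lp ℂ (ENNReal.ofReal p) (volume : Measure ℝ) →L[ℂ]
        Lp ℂ (ENNReal.ofReal p) (volume : Measure ℝ))
    (hH : ∀ f : Lp ℂ (ENNReal.ofReal p) (volume : Measure ℝ),
      (H f : ℝ → ℂ) =ᵐ[volume]
        fun x => ∑' k : ℕ, (c (k + 1) : ℂ) * f (x / (k + 1))) :
    ∑' k : ℕ, ENNReal.ofReal (c (k + 1) * ((k : ℝ) + 1) ^ ((1 : ℝ) / p))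
      ≤ ENNReal.ofReal ‖H‖ :=
  hausdorff_condition_necessary_general p c hc H hH
end

section
/- Let $T$ and $(T_n)$ be bounded normal operators on a complex Hilbert space with $T_n T = T T_n$ for all $n$ and $\|T-T_n\|\to 0$. Then the spectra $\sigma(T_n)$ converge to $\sigma(T)$ in Hausdorff distance; in fact $\mathrm{dist}_H(\sigma(T),\sigma(T_n))\le\|T-T_n\|$. -/
open Metric Filter

/-! For normal `b` and `z ∉ σ(b)`, the continuous functional calculus bounds the resolvent:
`‖(z - b)⁻¹‖ ≤ 1 / dist(z, σ(b))`. If moreover `‖a - b‖ < dist(z, σ(b))`, then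
`z - a = (z - b) (1 - (z - b)⁻¹ (a - b))` is invertible by a Neumann series, so `z ∉ σ(a)`.
Hence every point of `σ(a)` lies within `‖a - b‖` of `σ(b)`, and symmetrically when `a` is
normal as well. -/

section BanachAlgebra

variable {𝕜 A : Type*} [NormedField 𝕜] [NormedRing A] [NormedAlgebra 𝕜 A]
  [HasSummableGeomSeries A]

lemma spectrum.notMem_of_norm_sub_mul_norm_resolvent_lt {a b : A} {z : 𝕜}
    (hz : z ∉ spectrum 𝕜 b) (h : ‖a - b‖ * ‖resolvent b z‖ < 1) : z ∉ spectrum 𝕜 a := by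
  obtain ⟨u, hu⟩ := spectrum.notMem_iff.mp hz
  have hresolvent : resolvent b z = ↑u⁻¹ := by rw [resolvent, ← hu, Ring.inverse_unit]
  have hsmall : ‖(↑u⁻¹ : A) * (a - b)‖ < 1 :=
    (norm_mul_le _ _).trans_lt (by rwa [mul_comm, ← hresolvent])
  have hfactor : algebraMap 𝕜 A z - a = u * (1 - ↑u⁻¹ * (a - b)) := by
    rw [mul_sub, mul_one, ← mul_assoc, Units.mul_inv, one_mul, hu]
    abel
  rw [spectrum.notMem_iff, hfactor]
  exact u.isUnit.mul (Units.oneSub _ hsmall).isUnit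

end BanachAlgebra

section CStarAlgebra

variable {A : Type*} [CStarAlgebra A]

lemma IsStarNormal.norm_resolvent_le {b : A} (hb : IsStarNormal b) {z : ℂ}
    (hz : z ∉ spectrum ℂ b) : ‖resolvent b z‖ ≤ (infDist z (spectrum ℂ b))⁻¹ := by
  have hne : ∀ x ∈ spectrum ℂ b, z - x ≠ 0 := fun x hx h ↦ hz (sub_eq_zero.mp h ▸ hx)
  have hcfc : cfc (fun x ↦ (z - x)⁻¹) b = resolvent b z := by
    rw [cfc_inv (fun x ↦ z - x) b hne, cfc_sub (fun _ ↦ z) (fun x ↦ x) b, cfc_const z b,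
      cfc_id' ℂ b, resolvent]
  rw [← hcfc]
  refine norm_cfc_le (inv_nonneg.mpr infDist_nonneg) fun x hx ↦ ?_
  have hpos : 0 < infDist z (spectrum ℂ b) :=
    ((spectrum.isClosed b).notMem_iff_infDist_pos ⟨x, hx⟩).mp hz
  rw [norm_inv, ← dist_eq_norm]
  exact inv_anti₀ hpos (infDist_le_dist_of_mem hx)

lemma infDist_spectrum_le_norm_sub {a b : A} (hb : IsStarNormal b) {z : ℂ}
    (hz : z ∈ spectrum ℂ a) : infDist z (spectrum ℂ b) ≤ ‖a - b‖ := by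
  by_contra! h
  have hpos : 0 < infDist z (spectrum ℂ b) := (norm_nonneg _).trans_lt h
  have hzb : z ∉ spectrum ℂ b := fun hzb ↦ hpos.ne' (infDist_zero_of_mem hzb)
  refine spectrum.notMem_of_norm_sub_mul_norm_resolvent_lt hzb ?_ hz
  calc ‖a - b‖ * ‖resolvent b z‖
      ≤ ‖a - b‖ * (infDist z (spectrum ℂ b))⁻¹ := by gcongr; exact hb.norm_resolvent_le hzb
    _ < infDist z (spectrum ℂ b) * (infDist z (spectrum ℂ b))⁻¹ := by gcongr
    _ = 1 := mul_inv_cancel₀ hpos.ne'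

lemma hausdorffDist_spectrum_le_norm_sub {a b : A} (ha : IsStarNormal a) (hb : IsStarNormal b) :
    hausdorffDist (spectrum ℂ a) (spectrum ℂ b) ≤ ‖a - b‖ :=
  hausdorffDist_le_of_infDist (norm_nonneg _)
    (fun _ hz ↦ infDist_spectrum_le_norm_sub hb hz)
    (fun _ hz ↦ norm_sub_rev a b ▸ infDist_spectrum_le_norm_sub ha hz)

end CStarAlgebra

theorem spectra_converge_of_commuting_normal_general
    {H : Type*} [NormedAddCommGroup H] [InnerProductSpace ℂ H] [CompleteSpace H]
    (T : H →L[ℂ] H) (Tn : ℕ → H →L[ℂ] H)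
    (hT : IsStarNormal T) (hTn : ∀ n, IsStarNormal (Tn n))
    (hnorm : Tendsto (fun n => ‖T - Tn n‖) atTop (nhds 0)) :
    (∀ n, Metric.hausdorffDist (spectrum ℂ T) (spectrum ℂ (Tn n)) ≤ ‖T - Tn n‖) ∧
    Tendsto (fun n => Metric.hausdorffDist (spectrum ℂ (Tn n)) (spectrum ℂ T))
      atTop (nhds 0) := by
  have hkato n := hausdorffDist_spectrum_le_norm_sub hT (hTn n)
  refine ⟨hkato, squeeze_zero (fun _ ↦ hausdorffDist_nonneg) (fun n ↦ ?_) hnorm⟩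
  rw [hausdorffDist_comm]
  exact hkato n

/-- Kato's theorem: for commuting bounded normal operators, the Hausdorff distance of
spectra is bounded by the norm of the difference; hence spectra of commuting normal
approximants converge in Hausdorff distance. -/
theorem spectra_converge_of_commuting_normal
    {H : Type*} [NormedAddCommGroup H] [InnerProductSpace ℂ H] [CompleteSpace H]
    (T : H →L[ℂ] H) (Tn : ℕ → H →L[ℂ] H)
    (hT : IsStarNormal T) (hTn : ∀ n, IsStarNormal (Tn n))
    (hcomm : ∀ n, Tn n * T = T * Tn n)
    (hnorm : Tendsto (fun n => ‖T - Tn n‖) atTop (nhds 0)) :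
    (∀ n, Metric.hausdorffDist (spectrum ℂ T) (spectrum ℂ (Tn n)) ≤ ‖T - Tn n‖) ∧
    Tendsto (fun n => Metric.hausdorffDist (spectrum ℂ (Tn n)) (spectrum ℂ T))
      atTop (nhds 0) :=
  spectra_converge_of_commuting_normal_general T Tn hT hTn hnorm
end

section
/- Consider the operator $\mathcal{H}f(x)=f(x)+f(2x)$ on $L^2(\mathbb{R})$. Its spectrum is the circle $\{z\in\mathbb{C}: |z-1|=2^{-1/2}\}$; in particular, $\sigma(\mathcal{H})$ is not invariant under rotations about the origin. -/
open MeasureTheory Pointwise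

/-!
Write `H = 1 + A` with `A f = f (2 ·)`. Since `√2 • A` is a surjective isometry, both `‖A‖` and
`‖A⁻¹‖⁻¹` equal `2^{-1/2}`, so `σ(A)` lies on the circle of radius `2^{-1/2}`. Multiplying by the
unimodular function `|x| ^ (i t)` conjugates `A` into `2 ^ (i t) • A` (on the Mellin side: a
translation of the symbol), so `σ(A)` is invariant under every rotation about `0`; being nonempty,
it is the whole circle. Hence `σ(H)` is the circle of radius `2^{-1/2}` centred at `1`, which
`z ↦ -z` does not preserve.
-/

open Metric ENNReal Complex ComplexConjugate

theorem spectrum_subset_sphere_of_norm_le {𝕜 𝔸 : Type*} [NormedField 𝕜] [NormedRing 𝔸]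
    [NormedAlgebra 𝕜 𝔸] [CompleteSpace 𝔸] [NormOneClass 𝔸] (u : 𝔸ˣ) {r : ℝ}
    (hu : ‖(u : 𝔸)‖ ≤ r) (hu_inv : ‖(↑u⁻¹ : 𝔸)‖ ≤ r⁻¹) :
    spectrum 𝕜 (u : 𝔸) ⊆ sphere 0 r := by
  intro z hz
  have hz0 : z ≠ 0 := spectrum.ne_zero_of_mem_of_unit hz
  have hz_inv : z⁻¹ ∈ spectrum 𝕜 (↑u⁻¹ : 𝔸) := by
    rw [← spectrum.map_inv]; exact Set.inv_mem_inv.mpr hz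
  have hle : ‖z‖ ≤ r := (spectrum.norm_le_norm_of_mem hz).trans hu
  have hge : ‖z‖⁻¹ ≤ r⁻¹ := norm_inv z ▸ (spectrum.norm_le_norm_of_mem hz_inv).trans hu_inv
  have hr : 0 < r := (norm_pos_iff.mpr hz0).trans_le hle
  rw [mem_sphere_zero_iff_norm]
  exact le_antisymm hle ((inv_le_inv₀ (norm_pos_iff.mpr hz0) hr).mp hge)

theorem spectrum_smul_eq_of_mul_eq_smul_mul {R A : Type*} [CommSemiring R] [Ring A]
    [Algebra R A] {a u : A} (hu : IsUnit u) {ζ : R} (h : a * u = ζ • (u * a)) :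
    spectrum R (ζ • a) = spectrum R a := by
  obtain ⟨u, rfl⟩ := hu
  have : ζ • a = ↑u⁻¹ * a * u := by
    rw [mul_assoc, h, mul_smul_comm, ← mul_assoc, Units.inv_mul, one_mul]
  rw [this, spectrum.units_conjugate']

theorem eq_sphere_of_smul_subset {S : Set ℂ} {r : ℝ} (hS : S.Nonempty) (h_sub : S ⊆ sphere 0 r)
    (h_rot : ∀ ζ : ℂ, ‖ζ‖ = 1 → ζ • S ⊆ S) : S = sphere 0 r := by
  refine h_sub.antisymm fun w hw => ?_
  obtain ⟨z, hz⟩ := hS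
  have hzr : ‖z‖ = r := mem_sphere_zero_iff_norm.mp (h_sub hz)
  rw [mem_sphere_zero_iff_norm] at hw
  rcases eq_or_ne z 0 with rfl | hz0
  · rwa [norm_eq_zero.mp (hw.trans (hzr.symm.trans norm_zero))]
  · have hζ : ‖w / z‖ = 1 := by
      rw [norm_div, hw, hzr, div_self (hzr ▸ norm_ne_zero_iff.mpr hz0)]
    simpa [div_mul_cancel₀ w hz0] using h_rot _ hζ (Set.smul_mem_smul_set hz)

theorem exists_unimodular_comp_mul_left_eq_mul {a : ℝ} (ha₀ : a ≠ 0) (ha₁ : |a| ≠ 1) {ζ : ℂ}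
    (hζ : ‖ζ‖ = 1) :
    ∃ φ : ℝ → ℂ, Measurable φ ∧ (∀ x, ‖φ x‖ = 1) ∧ ∀ x ≠ 0, φ (a * x) = ζ * φ x := by
  have h_log : Real.log a ≠ 0 :=
    Real.log_ne_zero.mpr ⟨ha₀, fun h => ha₁ (by simp [h]), fun h => ha₁ (by simp [h])⟩
  set t := arg ζ / Real.log a
  -- `Real.log x = Real.log |x|`, so `φ x = |x| ^ (t * I)` away from `0`
  refine ⟨fun x => exp ((t * Real.log x : ℝ) * I), by fun_prop, fun x => norm_exp_ofReal_mul_I _,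
    fun x hx => ?_⟩
  dsimp only
  have h_arg : exp ((t * Real.log a : ℝ) * I) = ζ := by
    rw [div_mul_cancel₀ _ h_log]
    simpa [hζ] using norm_mul_exp_arg_mul_I ζ
  rw [← h_arg, ← exp_add, Real.log_mul ha₀ hx]
  push_cast
  ring_nf

section UnimodularMul

variable {α E : Type*} [MeasurableSpace α] {μ : Measure α} [NormedAddCommGroup E]
  [NormedSpace ℂ E] {p : ℝ≥0∞} {φ : α → ℂ}

theorem eLpNorm_smul_of_norm_eq_one (h_norm : ∀ x, ‖φ x‖ = 1) (f : α → E) :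
    eLpNorm (φ • f) p μ = eLpNorm f p μ :=
  eLpNorm_congr_norm_ae (.of_forall fun x => by simp [norm_smul, h_norm])

theorem MeasureTheory.MemLp.smul_of_norm_eq_one (hφ : AEStronglyMeasurable φ μ)
    (h_norm : ∀ x, ‖φ x‖ = 1) {f : α → E} (hf : MemLp f p μ) : MemLp (φ • f) p μ :=
  ⟨hφ.smul hf.1, eLpNorm_smul_of_norm_eq_one h_norm f ▸ hf.2⟩

variable [Fact (1 ≤ p)]

noncomputable def MeasureTheory.Lp.unimodularMul (φ : α → ℂ) (hφ : AEStronglyMeasurable φ μ)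
    (h_norm : ∀ x, ‖φ x‖ = 1) : Lp E p μ →ₗᵢ[ℂ] Lp E p μ where
  toFun f := ((Lp.memLp f).smul_of_norm_eq_one hφ h_norm).toLp _
  map_add' f g := by
    rw [← MemLp.toLp_add, MemLp.toLp_eq_toLp_iff]
    filter_upwards [Lp.coeFn_add f g] with x hx
    simp only [Pi.smul_apply', Pi.add_apply, hx, smul_add]
  map_smul' c f := by
    rw [RingHom.id_apply, ← MemLp.toLp_const_smul, MemLp.toLp_eq_toLp_iff]
    filter_upwards [Lp.coeFn_smul c f] with x hx
    simp only [Pi.smul_apply', Pi.smul_apply, hx, smul_comm (φ x) c]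
  norm_map' f := by
    change ‖((Lp.memLp f).smul_of_norm_eq_one hφ h_norm).toLp _‖ = _
    rw [Lp.norm_toLp, eLpNorm_smul_of_norm_eq_one h_norm, Lp.norm_def]

theorem MeasureTheory.Lp.coeFn_unimodularMul (hφ : AEStronglyMeasurable φ μ)
    (h_norm : ∀ x, ‖φ x‖ = 1) (f : Lp E p μ) : Lp.unimodularMul φ hφ h_norm f =ᵐ[μ] φ • ⇑f :=
  MemLp.coeFn_toLp ((Lp.memLp f).smul_of_norm_eq_one hφ h_norm)

theorem MeasureTheory.Lp.unimodularMul_surjective (hφ : AEStronglyMeasurable φ μ)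
    (h_norm : ∀ x, ‖φ x‖ = 1) :
    Function.Surjective (Lp.unimodularMul (E := E) (p := p) φ hφ h_norm) := by
  intro g
  have hψ : AEStronglyMeasurable (fun x => conj (φ x)) μ :=
    Complex.continuous_conj.comp_aestronglyMeasurable hφ
  have hψ_norm : ∀ x, ‖conj (φ x)‖ = 1 := by simp [h_norm]
  refine ⟨Lp.unimodularMul _ hψ hψ_norm g, Lp.ext ?_⟩
  filter_upwards [Lp.coeFn_unimodularMul hφ h_norm (Lp.unimodularMul _ hψ hψ_norm g),
    Lp.coeFn_unimodularMul hψ hψ_norm g] with x h₁ h₂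
  have h_conj : φ x * conj (φ x) = 1 := by rw [mul_comm, conj_mul', h_norm]; simp
  simp [h₁, h₂, smul_smul, h_conj]

end UnimodularMul

section Dilation

variable {E : Type*} [NormedAddCommGroup E] {p : ℝ≥0∞} {a : ℝ}

theorem eLpNorm_comp_mul_left (ha : a ≠ 0) {f : ℝ → E} (hf : AEStronglyMeasurable f volume) :
    eLpNorm (fun x => f (a * x)) p volume =
      ENNReal.ofReal |a⁻¹| ^ (1 / p).toReal * eLpNorm f p volume := by
  have h_map := Real.map_volume_mul_left ha
  rw [← smul_eq_mul, ← eLpNorm_smul_measure_of_ne_zero (by simpa using ha), ← h_map,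
    eLpNorm_map_measure (by rw [h_map]; exact hf.smul_measure _)
      (measurable_const_mul a).aemeasurable]
  rfl

theorem ae_eq_comp_mul_left {β : Type*} (ha : a ≠ 0) {f g : ℝ → β} (h : f =ᵐ[volume] g) :
    (fun x => f (a * x)) =ᵐ[volume] fun x => g (a * x) :=
  (Measure.quasiMeasurePreserving_smul volume ha).ae_eq_comp h

variable [NormedSpace ℂ E] [Fact (1 ≤ p)]

instance [Nontrivial E] : Nontrivial (Lp E p (volume : Measure ℝ)) := by
  obtain ⟨c, hc⟩ := exists_ne (0 : E)
  have h_finite : volume (Set.Icc (0 : ℝ) 1) ≠ ∞ := by simp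
  refine nontrivial_of_ne (indicatorConstLp p measurableSet_Icc h_finite c) 0 fun h => hc ?_
  have := norm_indicatorConstLp' (c := c) (hs := measurableSet_Icc) (hμs := h_finite)
    (zero_lt_one.trans_le (Fact.out : 1 ≤ p)).ne' (by simp)
  simp only [h, norm_zero, Real.volume_real_Icc_of_le zero_le_one, sub_zero, Real.one_rpow,
    mul_one] at this
  exact norm_eq_zero.mp this.symm

variable (a) in
def IsDilation (A : Lp E p (volume : Measure ℝ) →L[ℂ] Lp E p (volume : Measure ℝ)) : Prop :=
  ∀ f, (A f : ℝ → E) =ᵐ[volume] fun x => f (a * x)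

variable {A : Lp E p (volume : Measure ℝ) →L[ℂ] Lp E p (volume : Measure ℝ)}

theorem IsDilation.norm_apply (ha : a ≠ 0) (hA : IsDilation a A) (f : Lp E p volume) :
    ‖A f‖ = |a⁻¹| ^ (1 / p).toReal * ‖f‖ := by
  rw [Lp.norm_def, Lp.norm_def, eLpNorm_congr_ae (hA f),
    eLpNorm_comp_mul_left ha (Lp.aestronglyMeasurable f), toReal_mul, ← toReal_rpow,
    toReal_ofReal (abs_nonneg _)]

theorem IsDilation.surjective (ha : a ≠ 0) (hA : IsDilation a A) : Function.Surjective A := by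
  intro g
  have hg : AEStronglyMeasurable (fun x => g (a⁻¹ * x)) volume :=
    (Lp.aestronglyMeasurable g).comp_quasiMeasurePreserving
      (Measure.quasiMeasurePreserving_smul volume (inv_ne_zero ha))
  have hg_memLp : MemLp (fun x => g (a⁻¹ * x)) p volume :=
    ⟨hg, by
      rw [eLpNorm_comp_mul_left (inv_ne_zero ha) (Lp.aestronglyMeasurable g)]
      exact mul_lt_top (by finiteness) (Lp.eLpNorm_lt_top g)⟩
  refine ⟨hg_memLp.toLp _, Lp.ext ((hA _).trans ?_)⟩
  filter_upwards [ae_eq_comp_mul_left ha hg_memLp.coeFn_toLp] with x hx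
  rw [hx, inv_mul_cancel_left₀ ha]

theorem IsDilation.spectrum_subset_sphere [Nontrivial E] [CompleteSpace E] (ha : a ≠ 0)
    (hA : IsDilation a A) : spectrum ℂ A ⊆ sphere 0 (|a⁻¹| ^ (1 / p).toReal) := by
  set r := |a⁻¹| ^ (1 / p).toReal
  have hr : 0 < r := by positivity
  have h_inj : Function.Injective A := (injective_iff_map_eq_zero A).mpr fun f hf => by
    have := hA.norm_apply ha f
    rw [hf, norm_zero, eq_comm, mul_eq_zero] at this
    exact norm_eq_zero.mp (this.resolve_left hr.ne')
  obtain ⟨u, rfl⟩ := ContinuousLinearMap.isUnit_iff_bijective.mpr ⟨h_inj, hA.surjective ha⟩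
  refine spectrum_subset_sphere_of_norm_le u
    (ContinuousLinearMap.opNorm_le_bound _ hr.le fun f => (hA.norm_apply ha f).le)
    (ContinuousLinearMap.opNorm_le_bound _ (inv_nonneg.mpr hr.le) fun g => le_of_eq ?_)
  have h_right_inv : (u : Lp E p (volume : Measure ℝ) →L[ℂ] _)
      ((↑u⁻¹ : Lp E p (volume : Measure ℝ) →L[ℂ] _) g) = g := congr($(u.mul_inv) g)
  rw [← inv_mul_cancel_left₀ hr.ne' ‖_‖, ← hA.norm_apply ha, h_right_inv]

theorem IsDilation.mul_unimodularMul (ha : a ≠ 0) (hA : IsDilation a A) {φ : ℝ → ℂ}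
    (hφ : AEStronglyMeasurable φ volume) (h_norm : ∀ x, ‖φ x‖ = 1) {ζ : ℂ}
    (hζ : ∀ᵐ x, φ (a * x) = ζ * φ x) :
    A * (Lp.unimodularMul φ hφ h_norm).toContinuousLinearMap =
      ζ • ((Lp.unimodularMul φ hφ h_norm).toContinuousLinearMap * A) := by
  ext1 f
  refine Lp.ext ?_
  filter_upwards [hA (Lp.unimodularMul φ hφ h_norm f),
    ae_eq_comp_mul_left ha (Lp.coeFn_unimodularMul hφ h_norm f), hζ,
    Lp.coeFn_smul ζ (Lp.unimodularMul φ hφ h_norm (A f)), Lp.coeFn_unimodularMul hφ h_norm (A f),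
    hA f] with x h₁ h₂ h₃ h₄ h₅ h₆
  simp [h₁, h₂, h₃, h₄, h₅, h₆, mul_smul]

theorem IsDilation.spectrum_eq_sphere [Nontrivial E] [CompleteSpace E] (ha₀ : a ≠ 0)
    (ha₁ : |a| ≠ 1) (hA : IsDilation a A) :
    spectrum ℂ A = sphere 0 (|a⁻¹| ^ (1 / p).toReal) := by
  refine eq_sphere_of_smul_subset (spectrum.nonempty A) (hA.spectrum_subset_sphere ha₀)
    fun ζ hζ => ?_
  obtain ⟨φ, hφ, h_norm, h_hom⟩ := exists_unimodular_comp_mul_left_eq_mul ha₀ ha₁ hζ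
  have h_comm := hA.mul_unimodularMul ha₀ hφ.aestronglyMeasurable h_norm
    ((Measure.ae_ne volume 0).mono h_hom)
  have h_unit : IsUnit (Lp.unimodularMul (E := E) (p := p) (μ := volume) φ
      hφ.aestronglyMeasurable h_norm).toContinuousLinearMap :=
    ContinuousLinearMap.isUnit_iff_bijective.mpr
      ⟨LinearIsometry.injective _, Lp.unimodularMul_surjective hφ.aestronglyMeasurable h_norm⟩
  rw [← spectrum.smul_eq_smul _ _ (spectrum.nonempty A),
    spectrum_smul_eq_of_mul_eq_smul_mul h_unit h_comm]

end Dilation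

/-- The operator `𝓗 f (x) = f(x) + f(2x)` on `L²(ℝ)` has spectrum the circle
`{z : |z - 1| = 2^{-1/2}}`; in particular its spectrum is not invariant under all
rotations about the origin. -/
theorem spectrum_of_one_plus_dilation
    (H : Lp ℂ 2 (volume : Measure ℝ) →L[ℂ] Lp ℂ 2 (volume : Measure ℝ))
    (hH : ∀ f : Lp ℂ 2 (volume : Measure ℝ),
      (H f : ℝ → ℂ) =ᵐ[volume] fun x => f x + f (2 * x)) :
    spectrum ℂ H = {z : ℂ | ‖z - 1‖ = (2 : ℝ) ^ (-(1 : ℝ) / 2)} ∧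
    ∃ ζ : ℂ, ‖ζ‖ = 1 ∧ ζ • spectrum ℂ H ≠ spectrum ℂ H := by
  have h_dil : IsDilation 2 (H - 1) := fun f => by
    filter_upwards [Lp.coeFn_sub (H f) f, hH f] with x h₁ h₂
    rw [sub_apply, one_apply_eq_self, h₁, Pi.sub_apply, h₂, add_sub_cancel_left]
  have h_radius : |(2 : ℝ)⁻¹| ^ (1 / (2 : ℝ≥0∞)).toReal = (2 : ℝ) ^ (-(1 : ℝ) / 2) := by
    rw [abs_of_pos (by norm_num), Real.inv_rpow zero_le_two, ← Real.rpow_neg zero_le_two]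
    norm_num
  have h_spec : spectrum ℂ H = {z : ℂ | ‖z - 1‖ = (2 : ℝ) ^ (-(1 : ℝ) / 2)} := by
    have := spectrum.singleton_add_eq (H - 1) (1 : ℂ)
    rw [h_dil.spectrum_eq_sphere two_ne_zero (by norm_num), h_radius, map_one,
      add_sub_cancel] at this
    rw [← this]
    ext z
    simp
  refine ⟨h_spec, -1, by simp, fun h => ?_⟩
  set r := (2 : ℝ) ^ (-(1 : ℝ) / 2)
  have hr : 0 < r := by positivity
  have h_mem : (1 + r : ℂ) ∈ spectrum ℂ H := by
    simp [h_spec, abs_of_pos hr]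
  have h_neg_mem : -(1 + r : ℂ) ∈ spectrum ℂ H := by
    rw [← h]
    simpa using Set.smul_mem_smul_set (a := (-1 : ℂ)) h_mem
  rw [h_spec, Set.mem_ofPred_eq, show -(1 + r : ℂ) - 1 = -((2 + r : ℝ) : ℂ) by push_cast; ring,
    norm_neg, norm_real, Real.norm_of_nonneg (by positivity)] at h_neg_mem
  linarith
end
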